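/- Let ψ₁,…,ψ_m be unit vectors in ℂ^d with priors p_k > 0, Σ p_k = 1, such that S := Σ_ℓ p_ℓ |ψ_ℓ⟩⟨ψ_ℓ| is positive definite, and let (M_k) be the pretty good measurement, i.e. the Belavkin weighted square-root measurement with weights W_k = p_k. If the quantities p_k ⟨ψ_k, M_k ψ_k⟩ are equal for all k (i.e. the chance of successfully identifying each state ψ_k is inversely proportional to its a priori probability), then (M_k) is optimal: for every POVM (N_k) on ℂ^d, Σ_k p_k ⟨ψ_k, M_k ψ_k⟩ ≥ Σ_k p_k ⟨ψ_k, N_k ψ_k⟩. -/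

import Mathlib

/-!
Put `T = S^{1/2}` and `a k = ⟨ψ k, T⁻¹ ψ k⟩ ≥ 0`. The pretty good measurement identifies `ψ k` with
probability `p k * a k ^ 2`, so the hypothesis says that `γ = p k * a k` does not depend on `k`.
Cauchy–Schwarz for the form `⟨u, T v⟩`, applied to `T⁻¹ ψ k` and `x`, gives
`|⟨ψ k, x⟩|² ≤ a k * ⟨x, T x⟩`, i.e. `p k • |ψ k⟩⟨ψ k| ≤ γ • T` for every `k`. Hence every POVM `N`
has success probability at most `∑ k, tr (γ T N k) = γ tr T = γ tr (T⁻¹ S) = γ ∑ k, p k * a k`,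
which is the success probability of the pretty good measurement.
-/

open Matrix
open scoped ComplexOrder

noncomputable section

/-- The rank-one projector `|ψ⟩⟨ψ|` as a matrix. -/
def proj {d : ℕ} (ψ : Fin d → ℂ) : Matrix (Fin d) (Fin d) ℂ := vecMulVec ψ (star ψ)

/-- The (real) expectation value `⟨ψ, M ψ⟩`. -/
def expVal {d : ℕ} (M : Matrix (Fin d) (Fin d) ℂ) (ψ : Fin d → ℂ) : ℝ :=
  (star ψ ⬝ᵥ M *ᵥ ψ).re

/-- A POVM: a finite family of PSD matrices summing to the identity. -/
def IsPOVM {d m : ℕ} (M : Fin m → Matrix (Fin d) (Fin d) ℂ) : Prop :=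
  (∀ k, (M k).PosSemidef) ∧ ∑ k, M k = 1

/-- The square root of a positive semidefinite matrix, as `Matrix.PosSemidef.sqrt` was defined
in the older Mathlib (removed since). -/
def Matrix.PosSemidef.sqrt {n : Type*} [Fintype n] [DecidableEq n]
    {A : Matrix n n ℂ} (hA : A.PosSemidef) : Matrix n n ℂ :=
  (hA.1.eigenvectorUnitary : Matrix n n ℂ) *
    diagonal (fun i => ((Real.sqrt (hA.1.eigenvalues i) : ℝ) : ℂ)) *
    (star (hA.1.eigenvectorUnitary : Matrix n n ℂ))

namespace Matrix

variable {𝕜 n : Type*} [RCLike 𝕜] [Fintype n]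

theorem IsHermitian.posSemidef_of_re_dotProduct_nonneg {A : Matrix n n 𝕜} (hA : A.IsHermitian)
    (h : ∀ x, 0 ≤ RCLike.re (star x ⬝ᵥ A *ᵥ x)) : A.PosSemidef :=
  .of_dotProduct_mulVec_nonneg hA fun x =>
    RCLike.nonneg_iff.mpr ⟨h x, hA.im_star_dotProduct_mulVec_self x⟩

theorem PosSemidef.norm_dotProduct_mulVec_sq_le {T : Matrix n n 𝕜} (hT : T.PosSemidef)
    (u v : n → 𝕜) :
    ‖star u ⬝ᵥ T *ᵥ v‖ ^ 2 ≤ RCLike.re (star u ⬝ᵥ T *ᵥ u) * RCLike.re (star v ⬝ᵥ T *ᵥ v) := by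
  let := T.toSeminormedAddCommGroup hT
  let := T.toInnerProductSpace hT
  have hinner : ∀ x y : n → 𝕜, inner 𝕜 x y = star x ⬝ᵥ T *ᵥ y := fun x y => dotProduct_comm _ _
  have := inner_mul_inner_self_le (𝕜 := 𝕜) u v
  rwa [norm_inner_symm v u, ← sq, hinner, hinner, hinner] at this

open scoped MatrixOrder in
theorem PosSemidef.trace_mul_nonneg {A B : Matrix n n 𝕜} (hA : A.PosSemidef)
    (hB : B.PosSemidef) : 0 ≤ (A * B).trace := by
  classical
  obtain ⟨C, rfl⟩ := CStarAlgebra.nonneg_iff_eq_star_mul_self.mp hB.nonneg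
  rw [star_eq_conjTranspose, ← Matrix.mul_assoc, trace_mul_comm, ← Matrix.mul_assoc]
  exact (hA.mul_mul_conjTranspose_same C).trace_nonneg

section sqrt

open scoped MatrixOrder

variable [DecidableEq n]

theorem PosSemidef.sqrt_eq_cfcSqrt {A : Matrix n n ℂ} (hA : A.PosSemidef) :
    hA.sqrt = CFC.sqrt A := by
  rw [CFC.sqrt_eq_cfc, cfc_nnreal_eq_real _ A, hA.1.cfc_eq]
  simp [IsHermitian.cfc, PosSemidef.sqrt, Function.comp_def, hA.eigenvalues_nonneg]

theorem PosSemidef.sqrt_mul_self {A : Matrix n n ℂ} (hA : A.PosSemidef) :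
    hA.sqrt * hA.sqrt = A := by
  rw [hA.sqrt_eq_cfcSqrt, CFC.sqrt_mul_sqrt_self A hA.nonneg]

theorem PosDef.posDef_sqrt {A : Matrix n n ℂ} (hA : A.PosDef) : hA.posSemidef.sqrt.PosDef := by
  rw [hA.posSemidef.sqrt_eq_cfcSqrt]
  exact (IsStrictlyPositive.sqrt A hA.isStrictlyPositive).posDef

end sqrt

end Matrix

section proj

variable {d : ℕ}

theorem proj_mulVec (φ y : Fin d → ℂ) : proj φ *ᵥ y = (star φ ⬝ᵥ y) • φ := by
  ext i
  simp [proj, mulVec, dotProduct, vecMulVec_apply, Finset.mul_sum, mul_comm, mul_left_comm]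

theorem dotProduct_proj_mulVec (φ x y : Fin d → ℂ) :
    star x ⬝ᵥ proj φ *ᵥ y = (star x ⬝ᵥ φ) * (star φ ⬝ᵥ y) := by
  rw [proj_mulVec, dotProduct_smul, smul_eq_mul, mul_comm]

theorem isHermitian_proj (φ : Fin d → ℂ) : (proj φ).IsHermitian :=
  (posSemidef_vecMulVec_self_star φ).isHermitian

theorem expVal_eq_re_trace_proj_mul (A : Matrix (Fin d) (Fin d) ℂ) (ψ : Fin d → ℂ) :
    expVal A ψ = (proj ψ * A).trace.re := by
  rw [expVal, proj, vecMulVec_mul, trace_vecMulVec, dotProduct_comm ψ, dotProduct_mulVec]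

theorem expVal_smul (c : ℝ) (A : Matrix (Fin d) (Fin d) ℂ) (ψ : Fin d → ℂ) :
    expVal (c • A) ψ = c * expVal A ψ := by
  simp [expVal, smul_mulVec]

theorem Matrix.IsHermitian.expVal_mul_proj_mul {A : Matrix (Fin d) (Fin d) ℂ}
    (hA : A.IsHermitian) (ψ : Fin d → ℂ) : expVal (A * proj ψ * A) ψ = expVal A ψ ^ 2 := by
  have hreal : star ψ ⬝ᵥ A *ᵥ ψ = (expVal A ψ : ℂ) :=
    Complex.ext rfl (by simpa using hA.im_star_dotProduct_mulVec_self ψ)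
  have hstar : star ψ ᵥ* A = star (A *ᵥ ψ) := by rw [star_mulVec, hA.eq]
  rw [expVal, ← mulVec_mulVec, ← mulVec_mulVec, dotProduct_mulVec, hstar, dotProduct_proj_mulVec,
    star_dotProduct, hreal]
  simp [sq]

theorem Matrix.PosDef.posSemidef_expVal_inv_smul_sub_proj {T : Matrix (Fin d) (Fin d) ℂ}
    (hT : T.PosDef) (ψ : Fin d → ℂ) : (expVal T⁻¹ ψ • T - proj ψ).PosSemidef := by
  have ha : 0 ≤ expVal T⁻¹ ψ := hT.inv.posSemidef.re_dotProduct_nonneg ψ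
  refine ((hT.posSemidef.smul ha).isHermitian.sub
    (isHermitian_proj ψ)).posSemidef_of_re_dotProduct_nonneg fun x => ?_
  have hdet : IsUnit T.det := (isUnit_iff_isUnit_det T).mp hT.isUnit
  have hshift : star ψ ⬝ᵥ x = star (T⁻¹ *ᵥ ψ) ⬝ᵥ T *ᵥ x := by
    rw [star_mulVec, hT.inv.isHermitian.eq, ← dotProduct_mulVec, mulVec_mulVec,
      nonsing_inv_mul T hdet, one_mulVec]
  have hcs := hT.posSemidef.norm_dotProduct_mulVec_sq_le (T⁻¹ *ᵥ ψ) x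
  rw [← hshift, mulVec_mulVec, mul_nonsing_inv T hdet, one_mulVec, star_mulVec,
    hT.inv.isHermitian.eq, ← dotProduct_mulVec] at hcs
  rw [sub_mulVec, dotProduct_sub, smul_mulVec, dotProduct_smul, dotProduct_proj_mulVec,
    star_dotProduct x ψ]
  simp only [map_sub, RCLike.smul_re, RCLike.star_def, RCLike.conj_mul, ← RCLike.ofReal_pow,
    RCLike.ofReal_re]
  exact sub_nonneg.mpr hcs

theorem re_trace_mul_sum_smul_proj {ι : Type*} [Fintype ι] (A : Matrix (Fin d) (Fin d) ℂ)
    (p : ι → ℝ) (ψ : ι → Fin d → ℂ) :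
    (A * ∑ ℓ, p ℓ • proj (ψ ℓ)).trace.re = ∑ ℓ, p ℓ * expVal A (ψ ℓ) := by
  simp only [Matrix.mul_sum, trace_sum, Complex.re_sum, Matrix.mul_smul, trace_smul,
    Complex.real_smul, Complex.re_ofReal_mul, trace_mul_comm A, expVal_eq_re_trace_proj_mul]

theorem IsPOVM.sum_mul_expVal_le {m : ℕ} {N : Fin m → Matrix (Fin d) (Fin d) ℂ} (hN : IsPOVM N)
    {p : Fin m → ℝ} {ψ : Fin m → Fin d → ℂ} {Y : Matrix (Fin d) (Fin d) ℂ}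
    (hY : ∀ k, (Y - p k • proj (ψ k)).PosSemidef) :
    ∑ k, p k * expVal (N k) (ψ k) ≤ Y.trace.re := by
  have hk : ∀ k, p k * expVal (N k) (ψ k) ≤ (Y * N k).trace.re := fun k => by
    have := (Complex.nonneg_iff.mp ((hY k).trace_mul_nonneg (hN.1 k))).1
    rw [Matrix.sub_mul, trace_sub, Complex.sub_re, Matrix.smul_mul, trace_smul, Complex.real_smul,
      Complex.re_ofReal_mul, ← expVal_eq_re_trace_proj_mul] at this
    linarith
  calc ∑ k, p k * expVal (N k) (ψ k) ≤ ∑ k, (Y * N k).trace.re := Finset.sum_le_sum fun k _ => hk k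
    _ = Y.trace.re := by rw [← Complex.re_sum, ← trace_sum, ← Matrix.mul_sum, hN.2, Matrix.mul_one]

end proj

theorem pgm_equal_condition_implies_optimal_general {d m : ℕ}
    (ψ : Fin m → Fin d → ℂ)
    (p : Fin m → ℝ) (hp : ∀ k, 0 < p k)
    (hS : (∑ ℓ, p ℓ • proj (ψ ℓ)).PosDef)
    (M : Fin m → Matrix (Fin d) (Fin d) ℂ)
    (hM : ∀ k, M k = (Matrix.PosSemidef.sqrt hS.posSemidef)⁻¹ * (p k • proj (ψ k)) * (Matrix.PosSemidef.sqrt hS.posSemidef)⁻¹)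
    (hcond : ∀ k l, p k * expVal (M k) (ψ k) = p l * expVal (M l) (ψ l)) :
    ∀ N : Fin m → Matrix (Fin d) (Fin d) ℂ, IsPOVM N →
      ∑ k, p k * expVal (N k) (ψ k) ≤ ∑ k, p k * expVal (M k) (ψ k) := by
  intro N hN
  rcases isEmpty_or_nonempty (Fin m) with hm | ⟨⟨k₀⟩⟩
  · simp
  set T := hS.posSemidef.sqrt
  have hT : T.PosDef := hS.posDef_sqrt
  set a : Fin m → ℝ := fun k => expVal T⁻¹ (ψ k)
  have hMval : ∀ k, expVal (M k) (ψ k) = p k * a k ^ 2 := fun k => by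
    rw [hM k, Matrix.mul_smul, Matrix.smul_mul, expVal_smul, hT.inv.isHermitian.expVal_mul_proj_mul]
  have ha : ∀ k, 0 ≤ p k * a k := fun k =>
    mul_nonneg (hp k).le (hT.inv.posSemidef.re_dotProduct_nonneg (ψ k))
  have hγ : ∀ k, p k * a k = p k₀ * a k₀ := fun k => by
    have h := hcond k k₀
    rw [hMval, hMval] at h
    exact (sq_eq_sq₀ (ha k) (ha k₀)).mp (by linear_combination h)
  have htrace : T.trace.re = ∑ k, p k * a k := by
    rw [← re_trace_mul_sum_smul_proj, ← hS.posSemidef.sqrt_mul_self, ← Matrix.mul_assoc,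
      nonsing_inv_mul T ((isUnit_iff_isUnit_det T).mp hT.isUnit), Matrix.one_mul]
  calc ∑ k, p k * expVal (N k) (ψ k) ≤ ((p k₀ * a k₀) • T).trace.re :=
        hN.sum_mul_expVal_le fun k => by
          rw [← hγ k, mul_smul, ← smul_sub]
          exact (hT.posSemidef_expVal_inv_smul_sub_proj (ψ k)).smul (hp k).le
    _ = ∑ k, p k * expVal (M k) (ψ k) := by
        rw [trace_smul, Complex.real_smul, Complex.re_ofReal_mul, htrace, Finset.mul_sum]
        refine Finset.sum_congr rfl fun k _ => ?_
        rw [hMval, ← hγ k]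
        ring

/-- Belavkin/Ban optimality condition for the pretty good measurement: if the
quantities `p k * ⟨ψ k, M k ψ k⟩` are all equal, then the pretty good measurement
(weights `W k = p k`) is optimal. -/
theorem pgm_equal_condition_implies_optimal {d m : ℕ}
    (ψ : Fin m → Fin d → ℂ) (hψ : ∀ k, star (ψ k) ⬝ᵥ ψ k = 1)
    (p : Fin m → ℝ) (hp : ∀ k, 0 < p k) (hp1 : ∑ k, p k = 1)
    (hS : (∑ ℓ, p ℓ • proj (ψ ℓ)).PosDef)
    (M : Fin m → Matrix (Fin d) (Fin d) ℂ)
    (hM : ∀ k, M k = (Matrix.PosSemidef.sqrt hS.posSemidef)⁻¹ * (p k • proj (ψ k)) * (Matrix.PosSemidef.sqrt hS.posSemidef)⁻¹)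
    (hcond : ∀ k l, p k * expVal (M k) (ψ k) = p l * expVal (M l) (ψ l)) :
    ∀ N : Fin m → Matrix (Fin d) (Fin d) ℂ, IsPOVM N →
      ∑ k, p k * expVal (N k) (ψ k) ≤ ∑ k, p k * expVal (M k) (ψ k) :=
  pgm_equal_condition_implies_optimal_general ψ p hp hS M hM hcond
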